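/- Let A_g = {t ∈ ℝ : sup{s ∈ [a,b] : g(s) = g(t)} ∈ D_g} and H_g = {t ∈ ℝ : t ∈ (s₁, s₂] for some s₁, s₂ ∈ D_g with (s₁, s₂) ⊂ C_g}. Let f₁, f₂ ∈ BC¹_g([a,b], 𝔽). Then f₁f₂ ∈ BC¹_g([a,b], 𝔽) if and only if (f₁)'_g(t)·(f₂)'_g(t) = 0 for all t ∈ ((a*, b) ∩ A_g) \ H_g. -/

import Mathlib

open Set Filter Topology
open scoped Classical

noncomputable section

/-- The right-hand limit `g(t⁺)` of a nondecreasing function `g`. -/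
def rLim (g : ℝ → ℝ) (t : ℝ) : ℝ := sInf (g '' Set.Ioi t)

/-- `Δg(t) = g(t⁺) − g(t)`. -/
def jump (g : ℝ → ℝ) (t : ℝ) : ℝ := rLim g t - g t

/-- `C_g`: the set of points near which `g` is constant. -/
def Cset (g : ℝ → ℝ) : Set ℝ :=
  {t | ∃ ε > 0, ∀ u ∈ Set.Ioo (t - ε) (t + ε), g u = g t}

/-- `D_g`: the set of discontinuity points of `g`. -/
def Dset (g : ℝ → ℝ) : Set ℝ := {t | 0 < jump g t}

/-- The right endpoints `b_n` of the connected components of the open set `C_g`. -/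
def rightEndpoints (g : ℝ → ℝ) : Set ℝ :=
  {x | x ∉ Cset g ∧ ∃ s, s < x ∧ Set.Ioo s x ⊆ Cset g}

/-- The left endpoints `a_n` of the connected components of the open set `C_g`. -/
def leftEndpoints (g : ℝ → ℝ) : Set ℝ :=
  {x | x ∉ Cset g ∧ ∃ s, x < s ∧ Set.Ioo x s ⊆ Cset g}

/-- `N_g⁻ = {a_n : n ∈ Λ} \ D_g`. -/
def Nminus (g : ℝ → ℝ) : Set ℝ := leftEndpoints g \ Dset g

/-- `N_g⁺ = {b_n : n ∈ Λ} \ D_g`. -/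
def Nplus (g : ℝ → ℝ) : Set ℝ := rightEndpoints g \ Dset g

/-- `N_g = N_g⁻ ∪ N_g⁺`. -/
def Nset (g : ℝ → ℝ) : Set ℝ := Nminus g ∪ Nplus g

/-- `t* = t` if `t ∉ C_g`, and `t* = b_n` (the right endpoint of the connected component
`(a_n, b_n)` of `C_g` containing `t`) if `t ∈ C_g`. -/
def tstar (g : ℝ → ℝ) (t : ℝ) : ℝ :=
  if t ∈ Cset g then sSup (connectedComponentIn (Cset g) t) else t

/-- The filter along which the Stieltjes difference quotient is taken at a point of `[a,b]`:
from the right at points of `D_g ∪ N_g⁺ ∪ {a}`, from the left at points of `N_g⁻ ∪ {b}`,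
two-sided otherwise. -/
def sFilter (g : ℝ → ℝ) (a b t : ℝ) : Filter ℝ :=
  if t ∈ Dset g ∨ t ∈ Nplus g ∨ t = a then 𝓝[Set.Ioi t ∩ Set.Icc a b] t
  else if t ∈ Nminus g ∨ t = b then 𝓝[Set.Iio t ∩ Set.Icc a b] t
  else 𝓝[Set.Icc a b \ {t}] t

/-- `f` has Stieltjes derivative (`g`-derivative) `L` at `t`, relative to `[a,b]`. -/
def HasSDerivAt {K : Type*} [RCLike K] (g : ℝ → ℝ) (a b : ℝ) (f : ℝ → K) (t : ℝ) (L : K) :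
    Prop :=
  Filter.Tendsto (fun s => (g s - g (tstar g t))⁻¹ • (f s - f (tstar g t)))
    (sFilter g a b (tstar g t)) (𝓝 L)

/-- `f` is `g`-differentiable at `t`, relative to `[a,b]`. -/
def SDiffAt {K : Type*} [RCLike K] (g : ℝ → ℝ) (a b : ℝ) (f : ℝ → K) (t : ℝ) : Prop :=
  ∃ L, HasSDerivAt g a b f t L

/-- `f` is `g`-continuous at `t` relative to the domain `D`. -/
def GContAt {K : Type*} [RCLike K] (g : ℝ → ℝ) (f : ℝ → K) (D : Set ℝ) (t : ℝ) : Prop :=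
  ∀ ε > 0, ∃ δ > 0, ∀ s ∈ D, |g t - g s| < δ → ‖f t - f s‖ < ε

/-- `D₁`: points of `[a,b] ∩ N_g⁻` accumulating `D_g ∩ [a,t)`. -/
def D1 (g : ℝ → ℝ) (a b : ℝ) : Set ℝ :=
  {x | x ∈ Set.Icc a b ∩ Nminus g ∧ AccPt x (𝓟 (Dset g ∩ Set.Ico a x))}

/-- `D₂`: points of `[a,b] ∩ N_g⁺` accumulating `D_g ∩ (t,b]`. -/
def D2 (g : ℝ → ℝ) (a b : ℝ) : Set ℝ :=
  {x | x ∈ Set.Icc a b ∩ Nplus g ∧ AccPt x (𝓟 (Dset g ∩ Set.Ioc x b))}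

/-- `D₃`: points of `[a,b] \ (N_g ∪ D_g)` accumulating `D_g ∩ [a,b]`. -/
def D3 (g : ℝ → ℝ) (a b : ℝ) : Set ℝ :=
  {x | x ∈ Set.Icc a b \ (Nset g ∪ Dset g) ∧ AccPt x (𝓟 (Dset g ∩ Set.Icc a b))}

/-- `D̃₁`: points of `[a,b] ∩ N_g⁻` not accumulating `D_g ∩ [a,t)`. -/
def Dt1 (g : ℝ → ℝ) (a b : ℝ) : Set ℝ :=
  {x | x ∈ Set.Icc a b ∩ Nminus g ∧ ¬ AccPt x (𝓟 (Dset g ∩ Set.Ico a x))}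

/-- `D̃₂`: points of `[a,b] ∩ (N_g⁺ ∪ D_g)` not accumulating `D_g ∩ (t,b]`. -/
def Dt2 (g : ℝ → ℝ) (a b : ℝ) : Set ℝ :=
  {x | x ∈ Set.Icc a b ∩ (Nplus g ∪ Dset g) ∧ ¬ AccPt x (𝓟 (Dset g ∩ Set.Ioc x b))}

/-- `D̃₃`: points of `[a,b] \ (C_g ∪ N_g ∪ D_g)` not accumulating `D_g ∩ [a,b]`. -/
def Dt3 (g : ℝ → ℝ) (a b : ℝ) : Set ℝ :=
  {x | x ∈ Set.Icc a b \ (Cset g ∪ Nset g ∪ Dset g) ∧ ¬ AccPt x (𝓟 (Dset g ∩ Set.Icc a b))}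

/-- `C₁`: points of `[a,b] ∩ N_g⁻` accumulating `C_g ∩ [a,t)`. -/
def C1 (g : ℝ → ℝ) (a b : ℝ) : Set ℝ :=
  {x | x ∈ Set.Icc a b ∩ Nminus g ∧ AccPt x (𝓟 (Cset g ∩ Set.Ico a x))}

/-- `C₂`: points of `[a,b] ∩ (N_g⁺ ∪ D_g)` accumulating `C_g ∩ (t,b]`. -/
def C2 (g : ℝ → ℝ) (a b : ℝ) : Set ℝ :=
  {x | x ∈ Set.Icc a b ∩ (Nplus g ∪ Dset g) ∧ AccPt x (𝓟 (Cset g ∩ Set.Ioc x b))}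

/-- `C₃`: points of `[a,b] \ (C_g ∪ N_g ∪ D_g)` accumulating `C_g ∩ [a,b]`. -/
def C3 (g : ℝ → ℝ) (a b : ℝ) : Set ℝ :=
  {x | x ∈ Set.Icc a b \ (Cset g ∪ Nset g ∪ Dset g) ∧ AccPt x (𝓟 (Cset g ∩ Set.Icc a b))}

/-- `A_g = {t : sup{s ∈ [a,b] : g(s) = g(t)} ∈ D_g}`. -/
def Ag (g : ℝ → ℝ) (a b : ℝ) : Set ℝ :=
  {t | sSup {s | s ∈ Set.Icc a b ∧ g s = g t} ∈ Dset g}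

/-- `H_g`: points lying in some `(s₁, s₂]` with `s₁, s₂ ∈ D_g` and `(s₁, s₂) ⊆ C_g`. -/
def Hg (g : ℝ → ℝ) : Set ℝ :=
  {t | ∃ s₁ ∈ Dset g, ∃ s₂ ∈ Dset g, t ∈ Set.Ioc s₁ s₂ ∧ Set.Ioo s₁ s₂ ⊆ Cset g}

/-- Membership in `BC_g([a,b], K)`: bounded and `g`-continuous on `[a,b]`. -/
def MemBCg {K : Type*} [RCLike K] (g : ℝ → ℝ) (a b : ℝ) (f : ℝ → K) : Prop :=
  (∃ M, ∀ s ∈ Set.Icc a b, ‖f s‖ ≤ M) ∧ ∀ s ∈ Set.Icc a b, GContAt g f (Set.Icc a b) s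

/-- Membership in `BC¹_g([a,b], K)`. -/
def MemBC1g {K : Type*} [RCLike K] (g : ℝ → ℝ) (a b : ℝ) (f : ℝ → K) : Prop :=
  MemBCg g a b f ∧
    ∃ f' : ℝ → K, (∀ s ∈ Set.Icc a b, HasSDerivAt g a b f s (f' s)) ∧ MemBCg g a b f'

/-!
Write `F = f₁' f₂'`. The product rule for the Stieltjes derivative reads
`(f₁ f₂)'_g(t) = f₁ f₂' + f₂ f₁' + Δg(t*) F(t)`, and the first two terms lie in `BC_g`,
so everything hinges on the `g`-continuity of `Q(t) = Δg(t*) F(t)`.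

When `g(s) < g(t)` one has `Δg(s*) ≤ g(t) - g(s)`, and jumps of size `≥ ε` have values at
least `ε` apart, so `Q(s) → 0` as `g(s) → g(t)` from either side. Hence `Q` is `g`-continuous
at `t` as soon as it vanishes on the level set of `t`, which it does unless that level set ends
with a jump, i.e. `t ∈ A_g`. For such `t`, either the values of `g` on `[a,b]` accumulate at
`g(t)` from below, which forces `Q = 0` there, i.e. `F(t) = 0`; or the level is isolated on
both sides, and `Q` is constant on it. The levels of `A_g` approached from below are exactly
those of the points of `(a*, b) \ H_g`.
-/

variable {g : ℝ → ℝ}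

section Monotone

lemma g_le_rLim (hg : Monotone g) (t : ℝ) : g t ≤ rLim g t :=
  le_csInf (nonempty_Ioi.image g) (forall_mem_image.2 fun _ hu => hg (le_of_lt hu))

lemma rLim_le (hg : Monotone g) {t u : ℝ} (h : t < u) : rLim g t ≤ g u :=
  csInf_le ⟨g t, forall_mem_image.2 fun _ hv => hg (le_of_lt hv)⟩ (mem_image_of_mem g h)

lemma jump_nonneg (hg : Monotone g) (t : ℝ) : 0 ≤ jump g t :=
  sub_nonneg.2 (g_le_rLim hg t)

lemma rLim_eq_of_notMem_Dset (hg : Monotone g) {t : ℝ} (h : t ∉ Dset g) : rLim g t = g t :=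
  le_antisymm (sub_nonpos.1 (not_lt.1 h)) (g_le_rLim hg t)

lemma jump_le_sub_of_lt (hg : Monotone g) {t u : ℝ} (h : g t < g u) : jump g t ≤ g u - g t :=
  sub_le_sub_right (rLim_le hg (hg.reflect_lt h)) _

lemma le_of_lt_rLim (hg : Monotone g) {t u : ℝ} (h : g u < rLim g t) : u ≤ t :=
  not_lt.1 fun htu => not_lt.2 (rLim_le hg htu) h

lemma notMem_Dset_of_lt_of_eq (hg : Monotone g) {t u : ℝ} (htu : t < u) (h : g t = g u) :
    t ∉ Dset g := by
  intro ht
  have hj : 0 < rLim g t - g t := ht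
  linarith [rLim_le hg htu]

lemma eq_of_mem_Icc_of_eq (hg : Monotone g) {u v x : ℝ} (h : g u = g v) (hx : x ∈ Icc u v) :
    g x = g u :=
  le_antisymm (h ▸ hg hx.2) (hg hx.1)

end Monotone

section ConstancySet

lemma mem_Cset_iff {t : ℝ} : t ∈ Cset g ↔ ∀ᶠ u in 𝓝 t, g u = g t := by
  simp only [Metric.nhds_basis_ball.eventually_iff, Real.ball_eq_Ioo]
  rfl

lemma isOpen_Cset : IsOpen (Cset g) := by
  refine isOpen_iff_mem_nhds.2 fun t ht => ?_
  have ht' := mem_Cset_iff.1 ht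
  filter_upwards [ht'.eventually_nhds, ht'] with u hu hut
  exact mem_Cset_iff.2 (hu.mono fun v hv => hv.trans hut.symm)

lemma Ioo_subset_Cset_of_eq (hg : Monotone g) {u v : ℝ} (h : g u = g v) :
    Ioo u v ⊆ Cset g := fun x hx => by
  refine mem_Cset_iff.2 ?_
  filter_upwards [Ioo_mem_nhds hx.1 hx.2] with w hw
  rw [eq_of_mem_Icc_of_eq hg h (Ioo_subset_Icc_self hw),
    eq_of_mem_Icc_of_eq hg h (Ioo_subset_Icc_self hx)]

lemma hasDerivAt_zero_of_mem_Cset {t : ℝ} (ht : t ∈ Cset g) : HasDerivAt g 0 t :=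
  (hasDerivAt_const t (g t)).congr_of_eventuallyEq (mem_Cset_iff.1 ht)

lemma eq_of_Icc_subset_Cset {u v : ℝ} (huv : u ≤ v) (h : Icc u v ⊆ Cset g) : g v = g u :=
  constant_of_has_deriv_right_zero
    (fun _ hx => (hasDerivAt_zero_of_mem_Cset (h hx)).continuousAt.continuousWithinAt)
    (fun _ hx => (hasDerivAt_zero_of_mem_Cset (h (Ico_subset_Icc_self hx))).hasDerivWithinAt)
    v ⟨huv, le_rfl⟩

lemma eq_of_isPreconnected_subset_Cset {s : Set ℝ} (hs : IsPreconnected s) (hsC : s ⊆ Cset g)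
    {x y : ℝ} (hx : x ∈ s) (hy : y ∈ s) : g x = g y := by
  wlog hxy : x ≤ y generalizing x y
  · exact (this hy hx (le_of_not_ge hxy)).symm
  exact (eq_of_Icc_subset_Cset hxy (hs.ordConnected.out hx hy |>.trans hsC)).symm

lemma eq_of_eqOn_Ioo {t c y : ℝ} (hlc : ContinuousWithinAt g (Iio c) c) (htc : t < c)
    (h : ∀ u ∈ Ioo t c, g u = y) : g c = y := by
  have hc : c ∈ closure (Ioo t c) := by rw [closure_Ioo htc.ne]; exact ⟨htc.le, le_rfl⟩
  have himage : g '' Ioo t c ⊆ {y} := image_subset_iff.2 fun u hu => h u hu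
  have := closure_mono himage ((hlc.mono Ioo_subset_Iio_self).mem_closure_image hc)
  rwa [closure_singleton] at this

lemma eq_of_Ioo_subset_Cset {c d u : ℝ} (hlc : ContinuousWithinAt g (Iio d) d)
    (h : Ioo c d ⊆ Cset g) (hu : u ∈ Ioc c d) : g u = g d := by
  rcases hu.2.eq_or_lt with rfl | hud
  · rfl
  refine (eq_of_eqOn_Ioo hlc hud fun w hw => ?_).symm
  exact eq_of_isPreconnected_subset_Cset isPreconnected_Ioo h ⟨hu.1.trans hw.1, hw.2⟩
    ⟨hu.1, hud⟩

lemma rLim_eq_of_Ioo_subset_Cset (hg : Monotone g) {c d u : ℝ} (h : Ioo c d ⊆ Cset g)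
    (hu : u ∈ Ioo c d) : rLim g c = g u := by
  refine tendsto_nhds_unique (hg.tendsto_nhdsGT c) (tendsto_const_nhds.congr' ?_)
  filter_upwards [Ioo_mem_nhdsGT (hu.1.trans hu.2)] with w hw
  exact eq_of_isPreconnected_subset_Cset isPreconnected_Ioo h hu hw

lemma notMem_Cset_of_mem_Dset (hg : Monotone g) {t : ℝ} (ht : t ∈ Dset g) : t ∉ Cset g :=
  fun hC => by
    obtain ⟨u, hu, htu⟩ := (((mem_Cset_iff.1 hC).filter_mono nhdsWithin_le_nhds).and
      (self_mem_nhdsWithin (s := Ioi t))).exists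
    exact notMem_Dset_of_lt_of_eq hg htu hu.symm ht

end ConstancySet

section Endpoints

lemma mem_leftEndpoints_of_eq (hg : Monotone g) {T u : ℝ} (hTC : T ∉ Cset g) (hTu : T < u)
    (h : g T = g u) : T ∈ leftEndpoints g :=
  ⟨hTC, u, hTu, Ioo_subset_Cset_of_eq hg h⟩

lemma mem_rightEndpoints_of_eq (hg : Monotone g) {T u : ℝ} (hTC : T ∉ Cset g) (huT : u < T)
    (h : g u = g T) : T ∈ rightEndpoints g :=
  ⟨hTC, u, huT, Ioo_subset_Cset_of_eq hg h⟩

lemma mem_Dset_of_mem_leftEndpoints_of_mem_rightEndpoints (hg : Monotone g) {T : ℝ}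
    (hlc : ContinuousWithinAt g (Iio T) T) (hl : T ∈ leftEndpoints g)
    (hr : T ∈ rightEndpoints g) : T ∈ Dset g := by
  obtain ⟨hTC, d, hTd, hd⟩ := hl
  obtain ⟨-, c, hcT, hc⟩ := hr
  by_contra hTD
  have hu : (c + T) / 2 ∈ Ioo c T := ⟨left_lt_add_div_two.2 hcT, add_div_two_lt_right.2 hcT⟩
  have hv : (T + d) / 2 ∈ Ioo T d := ⟨left_lt_add_div_two.2 hTd, add_div_two_lt_right.2 hTd⟩
  have heq : g ((c + T) / 2) = g ((T + d) / 2) := by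
    rw [eq_of_Ioo_subset_Cset hlc hc (Ioo_subset_Ioc_self hu),
      ← rLim_eq_of_Ioo_subset_Cset hg hd hv, rLim_eq_of_notMem_Dset hg hTD]
  exact hTC (Ioo_subset_Cset_of_eq hg heq ⟨hu.2, hv.1⟩)

end Endpoints

section Tstar

variable {a b t : ℝ}

lemma tstar_of_mem_Cset (ht : t ∈ Cset g) :
    tstar g t = sSup (connectedComponentIn (Cset g) t) :=
  if_pos ht

lemma tstar_of_notMem_Cset (ht : t ∉ Cset g) : tstar g t = t :=
  if_neg ht

lemma connectedComponentIn_Cset_subset_Iio (ht : t ∈ Cset g) (htb : t ≤ b)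
    (hb : b ∉ Cset g) : connectedComponentIn (Cset g) t ⊆ Iio b := fun _ hu =>
  not_le.1 fun hbu => hb <| connectedComponentIn_subset _ _ <|
    isPreconnected_connectedComponentIn.ordConnected.out (mem_connectedComponentIn ht) hu
      ⟨htb, hbu⟩

lemma bddAbove_connectedComponentIn_Cset (ht : t ∈ Cset g) (htb : t ≤ b) (hb : b ∉ Cset g) :
    BddAbove (connectedComponentIn (Cset g) t) :=
  ⟨b, fun _ hu => (connectedComponentIn_Cset_subset_Iio ht htb hb hu).le⟩

lemma le_tstar (htb : t ≤ b) (hb : b ∉ Cset g) : t ≤ tstar g t := by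
  by_cases ht : t ∈ Cset g
  · rw [tstar_of_mem_Cset ht]
    exact le_csSup (bddAbove_connectedComponentIn_Cset ht htb hb) (mem_connectedComponentIn ht)
  · rw [tstar_of_notMem_Cset ht]

lemma tstar_le (htb : t ≤ b) (hb : b ∉ Cset g) : tstar g t ≤ b := by
  by_cases ht : t ∈ Cset g
  · rw [tstar_of_mem_Cset ht]
    exact csSup_le ⟨t, mem_connectedComponentIn ht⟩ fun u hu =>
      (connectedComponentIn_Cset_subset_Iio ht htb hb hu).le
  · rwa [tstar_of_notMem_Cset ht]

lemma tstar_mem_Icc (ht : t ∈ Icc a b) (hb : b ∉ Cset g) : tstar g t ∈ Icc a b :=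
  ⟨ht.1.trans (le_tstar ht.2 hb), tstar_le ht.2 hb⟩

lemma Ico_tstar_subset (ht : t ∈ Cset g) :
    Ico t (tstar g t) ⊆ connectedComponentIn (Cset g) t := fun u hu => by
  rw [tstar_of_mem_Cset ht] at hu
  obtain ⟨w, hw, huw⟩ := exists_lt_of_lt_csSup ⟨t, mem_connectedComponentIn ht⟩ hu.2
  exact isPreconnected_connectedComponentIn.ordConnected.out (mem_connectedComponentIn ht) hw
    ⟨hu.1, huw.le⟩

lemma tstar_notMem_Cset (htb : t ≤ b) (hb : b ∉ Cset g) : tstar g t ∉ Cset g := by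
  by_cases ht : t ∈ Cset g
  · intro hC
    obtain ⟨ε, hε, hball⟩ := Metric.isOpen_iff.1 isOpen_Cset _ hC
    have hsub : Ico t (tstar g t + ε) ⊆ Cset g := fun u hu => by
      rcases lt_or_ge u (tstar g t) with h | h
      · exact connectedComponentIn_subset _ _ (Ico_tstar_subset ht ⟨hu.1, h⟩)
      · exact hball (by rw [Real.ball_eq_Ioo]; constructor <;> linarith [hu.2])
    have hmem : tstar g t + ε / 2 ∈ connectedComponentIn (Cset g) t :=
      isPreconnected_Ico.subset_connectedComponentIn ⟨le_rfl, by linarith [le_tstar htb hb]⟩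
        hsub ⟨by linarith [le_tstar htb hb], by linarith⟩
    have := le_csSup (bddAbove_connectedComponentIn_Cset ht htb hb) hmem
    rw [← tstar_of_mem_Cset ht] at this
    linarith
  · rwa [tstar_of_notMem_Cset ht]

lemma g_tstar (hlc : ∀ x, ContinuousWithinAt g (Iio x) x) (htb : t ≤ b) (hb : b ∉ Cset g) :
    g (tstar g t) = g t := by
  by_cases ht : t ∈ Cset g
  · have hlt : t < tstar g t :=
      (le_tstar htb hb).lt_of_ne fun h => tstar_notMem_Cset htb hb (h ▸ ht)
    exact eq_of_eqOn_Ioo (hlc _) hlt fun u hu =>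
      eq_of_isPreconnected_subset_Cset isPreconnected_connectedComponentIn
        (connectedComponentIn_subset _ _) (Ico_tstar_subset ht ⟨hu.1.le, hu.2⟩)
        (mem_connectedComponentIn ht)
  · rw [tstar_of_notMem_Cset ht]

end Tstar

section LevelSup

def levelSup (g : ℝ → ℝ) (a b t : ℝ) : ℝ := sSup {s | s ∈ Icc a b ∧ g s = g t}

variable {a b s t : ℝ}

lemma mem_Ag_iff : t ∈ Ag g a b ↔ levelSup g a b t ∈ Dset g := Iff.rfl

lemma le_levelSup (hs : s ∈ Icc a b) (h : g s = g t) : s ≤ levelSup g a b t :=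
  le_csSup ⟨b, fun _ hu => hu.1.2⟩ ⟨hs, h⟩

lemma levelSup_le (ht : t ∈ Icc a b) : levelSup g a b t ≤ b :=
  csSup_le ⟨t, ht, rfl⟩ fun _ hu => hu.1.2

lemma levelSup_mem_Icc (ht : t ∈ Icc a b) : levelSup g a b t ∈ Icc a b :=
  ⟨ht.1.trans (le_levelSup (t := t) ht rfl), levelSup_le ht⟩

lemma levelSup_congr (h : g s = g t) : levelSup g a b s = levelSup g a b t := by
  simp only [levelSup, h]

lemma g_levelSup (hg : Monotone g) (hlc : ∀ x, ContinuousWithinAt g (Iio x) x)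
    (ht : t ∈ Icc a b) : g (levelSup g a b t) = g t := by
  rcases (le_levelSup (t := t) ht rfl).eq_or_lt with h | h
  · rw [← h]
  refine eq_of_eqOn_Ioo (hlc _) h fun u hu => ?_
  obtain ⟨w, hw, huw⟩ :=
    exists_lt_of_lt_csSup (s := {s | s ∈ Icc a b ∧ g s = g t}) ⟨t, ht, rfl⟩ hu.2
  exact le_antisymm (hw.2 ▸ hg huw.le) (hg hu.1.le)

lemma tstar_le_levelSup (hlc : ∀ x, ContinuousWithinAt g (Iio x) x) (ht : t ∈ Icc a b)
    (hb : b ∉ Cset g) : tstar g t ≤ levelSup g a b t :=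
  le_levelSup (tstar_mem_Icc ht hb) (g_tstar hlc ht.2 hb)

lemma tstar_eq_levelSup_of_jump_pos (hg : Monotone g) (hlc : ∀ x, ContinuousWithinAt g (Iio x) x)
    (ht : t ∈ Icc a b) (hb : b ∉ Cset g) (hj : 0 < jump g (tstar g t)) :
    tstar g t = levelSup g a b t :=
  (tstar_le_levelSup hlc ht hb).eq_of_not_lt fun hlt =>
    notMem_Dset_of_lt_of_eq hg hlt (by rw [g_tstar hlc ht.2 hb, g_levelSup hg hlc ht]) hj

end LevelSup

section ApproachedFromBelow

def ApproachedFromBelow (g : ℝ → ℝ) (D : Set ℝ) (y : ℝ) : Prop :=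
  ∀ δ > 0, ∃ s ∈ D, y - δ < g s ∧ g s < y

variable {a b p t : ℝ}

lemma approachedFromBelow_of_lt (hlc : ContinuousWithinAt g (Iio p) p) (hap : a < p)
    (hpb : p ≤ b) (hlt : ∀ u ∈ Ico a p, g u < g p) :
    ApproachedFromBelow g (Icc a b) (g p) := fun δ hδ => by
  obtain ⟨u, hu, hua⟩ := ((Metric.tendsto_nhds.1 hlc δ hδ).and (Ioo_mem_nhdsLT hap)).exists
  rw [Real.dist_eq] at hu
  exact ⟨u, ⟨hua.1.le, hua.2.le.trans hpb⟩, by linarith [neg_abs_le (g u - g p)],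
    hlt u ⟨hua.1.le, hua.2⟩⟩

lemma tstar_eq_levelSup_of_not_approachedFromBelow (hg : Monotone g)
    (hlc : ∀ x, ContinuousWithinAt g (Iio x) x) (ha : a ∉ Nminus g) (hb : b ∉ Cset g)
    (ht : t ∈ Icc a b) (hna : ¬ ApproachedFromBelow g (Icc a b) (g t)) :
    tstar g t = levelSup g a b t := by
  set τ := levelSup g a b t
  by_contra hne
  have hlt : tstar g t < τ := (tstar_le_levelSup hlc ht hb).lt_of_ne hne
  have hgτ : g t = g τ := (g_levelSup hg hlc ht).symm
  have htC : t ∉ Cset g := fun htC =>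
    have htt : t < tstar g t :=
      (le_tstar ht.2 hb).lt_of_ne fun h => tstar_notMem_Cset ht.2 hb (h ▸ htC)
    tstar_notMem_Cset ht.2 hb (Ioo_subset_Cset_of_eq hg hgτ ⟨htt, hlt⟩)
  rw [tstar_of_notMem_Cset htC] at hlt
  have hat : a < t := ht.1.lt_of_ne fun hat =>
    ha ⟨⟨hat ▸ htC, τ, hat ▸ hlt, hat ▸ Ioo_subset_Cset_of_eq hg hgτ⟩,
      hat ▸ notMem_Dset_of_lt_of_eq hg hlt hgτ⟩
  exact hna (approachedFromBelow_of_lt (hlc t) hat ht.2 fun u hu => (hg hu.2.le).lt_of_ne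
    fun hut => htC (Ioo_subset_Cset_of_eq hg (hut.trans hgτ) ⟨hu.2, hlt⟩))

lemma notMem_Hg_of_approachedFromBelow (hg : Monotone g)
    (hlc : ∀ x, ContinuousWithinAt g (Iio x) x) {D : Set ℝ}
    (happ : ApproachedFromBelow g D (g t)) : t ∉ Hg g := by
  rintro ⟨s₁, hs₁, s₂, -, hts, hC⟩
  have hs : s₁ < s₂ := hts.1.trans_le hts.2
  have hm : (s₁ + s₂) / 2 ∈ Ioo s₁ s₂ :=
    ⟨left_lt_add_div_two.2 hs, add_div_two_lt_right.2 hs⟩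
  have hgt : g t = rLim g s₁ := by
    rw [eq_of_Ioo_subset_Cset (hlc _) hC hts, rLim_eq_of_Ioo_subset_Cset hg hC hm,
      eq_of_Ioo_subset_Cset (hlc _) hC (Ioo_subset_Ioc_self hm)]
  obtain ⟨s, -, hs₁', hs₂'⟩ := happ (jump g s₁) hs₁
  have hss₁ := hg (le_of_lt_rLim hg (hgt ▸ hs₂'))
  have hjump : jump g s₁ = rLim g s₁ - g s₁ := rfl
  linarith

lemma tstar_lt_of_approachedFromBelow (hg : Monotone g)
    (hlc : ∀ x, ContinuousWithinAt g (Iio x) x) (hab : a ≤ b) (hb : b ∉ Cset g)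
    (happ : ApproachedFromBelow g (Icc a b) (g t)) :
    tstar g a < t := by
  obtain ⟨s, hs, -, hst⟩ := happ 1 one_pos
  refine lt_of_not_ge fun hta => ?_
  have := hg hta
  rw [g_tstar hlc hab hb] at this
  linarith [hg hs.1]

lemma g_lt_of_tstar_lt (hg : Monotone g) (hab : a ≤ b) (ha : a ∉ Nminus g) (hb : b ∉ Cset g)
    (hat : tstar g a < t) : g a < g t := by
  refine (hg ((le_tstar hab hb).trans hat.le)).lt_of_ne fun hga => ?_
  have hastar : tstar g a = a := ((le_tstar hab hb).lt_or_eq.resolve_left fun h =>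
    tstar_notMem_Cset hab hb (Ioo_subset_Cset_of_eq hg hga ⟨h, hat⟩)).symm
  have hat' : a < t := hastar ▸ hat
  exact ha ⟨⟨hastar ▸ tstar_notMem_Cset hab hb, t, hat', Ioo_subset_Cset_of_eq hg hga⟩,
    notMem_Dset_of_lt_of_eq hg hat' hga⟩

lemma approachedFromBelow_of_tstar_lt (hg : Monotone g)
    (hlc : ∀ x, ContinuousWithinAt g (Iio x) x) (hab : a ≤ b) (ha : a ∉ Nminus g)
    (hb : b ∉ Cset g) (hat : tstar g a < t) (htb : t ≤ b) (hτ : levelSup g a b t ∈ Dset g)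
    (hH : t ∉ Hg g) : ApproachedFromBelow g (Icc a b) (g t) := by
  have ht : t ∈ Icc a b := ⟨(le_tstar hab hb).trans hat.le, htb⟩
  set L := {s | s ∈ Icc a b ∧ g s = g t}
  set τ := levelSup g a b t
  have hLne : L.Nonempty := ⟨t, ht, rfl⟩
  have hLbdd : BddBelow L := ⟨a, fun _ hs => hs.1.1⟩
  have hσt : sInf L ≤ t := csInf_le hLbdd ⟨ht, rfl⟩
  have hgτ : g τ = g t := g_levelSup hg hlc ht
  have htτ : t ≤ τ := le_levelSup ht rfl
  have hright : ∀ u, sInf L < u → ∃ w ∈ L, w < u := fun _ => exists_lt_of_csInf_lt hLne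
  -- `inf L` is a jump point (then `t ∈ H_g`) or lies on the level, approached from the left
  rcases (hg hσt).lt_or_eq with hlt | heq
  · have hσt' : sInf L < t := hσt.lt_of_ne fun h => hlt.ne (h ▸ rfl)
    refine absurd ⟨sInf L, ?_, τ, hτ, ⟨hσt', htτ⟩, ?_⟩ hH
    · have hrLim : g t ≤ rLim g (sInf L) :=
        le_csInf (nonempty_Ioi.image g) (forall_mem_image.2 fun u hu => by
          obtain ⟨w, hw, hwu⟩ := hright u hu
          exact hw.2 ▸ hg hwu.le)
      show 0 < rLim g (sInf L) - g (sInf L)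
      linarith
    · intro x hx
      obtain ⟨w, hw, hwx⟩ := hright x hx.1
      exact Ioo_subset_Cset_of_eq hg (hw.2.trans hgτ.symm) ⟨hwx, hx.2⟩
  · have haσ : a < sInf L := (le_csInf hLne fun _ hs => hs.1.1).lt_of_ne fun haσ =>
      (g_lt_of_tstar_lt hg hab ha hb hat).ne (by rw [haσ, heq])
    rw [← heq]
    exact approachedFromBelow_of_lt (hlc _) haσ (hσt.trans htb) fun u hu =>
      (hg hu.2.le).lt_of_ne fun hu' => not_le.2 hu.2
        (csInf_le hLbdd ⟨⟨hu.1, hu.2.le.trans (hσt.trans htb)⟩, hu'.trans heq⟩)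

end ApproachedFromBelow

section GContinuity

variable {K : Type*} [RCLike K] {D : Set ℝ} {f f₁ f₂ : ℝ → K} {t : ℝ}

lemma gContAt_iff_tendsto :
    GContAt g f D t ↔ Tendsto f (comap g (𝓝 (g t)) ⊓ 𝓟 D) (𝓝 (f t)) := by
  rw [((Metric.nhds_basis_ball.comap g).inf_principal D).tendsto_iff Metric.nhds_basis_ball]
  simp only [GContAt, mem_inter_iff, mem_preimage, Metric.mem_ball, dist_eq_norm,
    Real.norm_eq_abs, and_imp]
  refine forall₂_congr fun _ _ => exists_congr fun _ => and_congr_right fun _ =>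
    ⟨fun h s hgs hs => ?_, fun h s hs hgs => ?_⟩
  · rw [norm_sub_rev]; exact h s hs (by rwa [abs_sub_comm])
  · rw [norm_sub_rev]; exact h s (by rwa [abs_sub_comm]) hs

lemma GContAt.add (h₁ : GContAt g f₁ D t) (h₂ : GContAt g f₂ D t) :
    GContAt g (fun s => f₁ s + f₂ s) D t :=
  gContAt_iff_tendsto.2 ((gContAt_iff_tendsto.1 h₁).add (gContAt_iff_tendsto.1 h₂))

lemma GContAt.sub (h₁ : GContAt g f₁ D t) (h₂ : GContAt g f₂ D t) :
    GContAt g (fun s => f₁ s - f₂ s) D t :=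
  gContAt_iff_tendsto.2 ((gContAt_iff_tendsto.1 h₁).sub (gContAt_iff_tendsto.1 h₂))

lemma GContAt.mul (h₁ : GContAt g f₁ D t) (h₂ : GContAt g f₂ D t) :
    GContAt g (fun s => f₁ s * f₂ s) D t :=
  gContAt_iff_tendsto.2 ((gContAt_iff_tendsto.1 h₁).mul (gContAt_iff_tendsto.1 h₂))

lemma GContAt.congr (hf : GContAt g f₁ D t) (h : EqOn f₁ f₂ D) (ht : t ∈ D) :
    GContAt g f₂ D t := fun ε hε => by
  obtain ⟨δ, hδ, H⟩ := hf ε hε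
  exact ⟨δ, hδ, fun s hs hgs => h ht ▸ h hs ▸ H s hs hgs⟩

lemma GContAt.eq_of_g_eq (hf : GContAt g f D t) {s : ℝ} (hs : s ∈ D) (h : g s = g t) :
    f s = f t := by
  by_contra hne
  obtain ⟨δ, hδ, H⟩ := hf _ (norm_pos_iff.2 (sub_ne_zero.2 (Ne.symm hne)))
  exact lt_irrefl _ (H s hs (by rwa [h, sub_self, abs_zero]))

lemma gContAt_of_level_below_above (hlevel : ∀ s ∈ D, g s = g t → f s = f t)
    (hbelow : ∀ ε > 0, ∃ δ > 0, ∀ s ∈ D,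
      g t - δ < g s → g s < g t → ‖f t - f s‖ < ε)
    (habove : ∀ ε > 0, ∃ δ > 0, ∀ s ∈ D,
      g t < g s → g s < g t + δ → ‖f t - f s‖ < ε) :
    GContAt g f D t := fun ε hε => by
  obtain ⟨δ₁, hδ₁, h₁⟩ := hbelow ε hε
  obtain ⟨δ₂, hδ₂, h₂⟩ := habove ε hε
  refine ⟨min δ₁ δ₂, lt_min hδ₁ hδ₂, fun s hs hgs => ?_⟩
  rw [abs_lt] at hgs
  rcases lt_trichotomy (g s) (g t) with hlt | heq | hgt
  · exact h₁ s hs (by linarith [min_le_left δ₁ δ₂]) hlt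
  · rwa [hlevel s hs heq, sub_self, norm_zero]
  · exact h₂ s hs hgt (by linarith [min_le_right δ₁ δ₂])

lemma eq_zero_of_gContAt_of_approachedFromBelow (hf : GContAt g f D t)
    (hbelow : ∀ ε > 0, ∃ δ > 0, ∀ s ∈ D, g t - δ < g s → g s < g t → ‖f s‖ < ε)
    (happ : ApproachedFromBelow g D (g t)) : f t = 0 := by
  by_contra hne
  have hε : 0 < ‖f t‖ / 2 := half_pos (norm_pos_iff.2 hne)
  obtain ⟨δ₁, hδ₁, h₁⟩ := hf _ hε
  obtain ⟨δ₂, hδ₂, h₂⟩ := hbelow _ hε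
  obtain ⟨s, hs, hs₁, hs₂⟩ := happ (min δ₁ δ₂) (lt_min hδ₁ hδ₂)
  have e₁ := h₁ s hs (by rw [abs_lt]; constructor <;> linarith [min_le_left δ₁ δ₂])
  have e₂ := h₂ s hs (by linarith [min_le_right δ₁ δ₂]) hs₂
  linarith [norm_sub_norm_le (f t) (f s)]

variable {a b : ℝ}

lemma MemBCg.add (h₁ : MemBCg g a b f₁) (h₂ : MemBCg g a b f₂) :
    MemBCg g a b (fun s => f₁ s + f₂ s) := by
  obtain ⟨⟨M₁, hM₁⟩, hc₁⟩ := h₁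
  obtain ⟨⟨M₂, hM₂⟩, hc₂⟩ := h₂
  refine ⟨⟨M₁ + M₂, fun s hs => ?_⟩, fun s hs => (hc₁ s hs).add (hc₂ s hs)⟩
  exact (norm_add_le _ _).trans (add_le_add (hM₁ s hs) (hM₂ s hs))

lemma MemBCg.mul (h₁ : MemBCg g a b f₁) (h₂ : MemBCg g a b f₂) :
    MemBCg g a b (fun s => f₁ s * f₂ s) := by
  obtain ⟨⟨M₁, hM₁⟩, hc₁⟩ := h₁
  obtain ⟨⟨M₂, hM₂⟩, hc₂⟩ := h₂
  refine ⟨⟨M₁ * M₂, fun s hs => ?_⟩, fun s hs => (hc₁ s hs).mul (hc₂ s hs)⟩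
  rw [norm_mul]
  exact mul_le_mul (hM₁ s hs) (hM₂ s hs) (norm_nonneg _) ((norm_nonneg _).trans (hM₁ s hs))

end GContinuity

section JumpTerm

variable {K : Type*} [RCLike K] {F : ℝ → K} {a b s t M : ℝ}

lemma exists_pos_forall_mul_lt (M : ℝ) {ε : ℝ} (hε : 0 < ε) :
    ∃ δ > 0, ∀ j, 0 ≤ j → j < δ → j * M < ε := by
  refine ⟨ε / (|M| + 1), by positivity, fun j hj hjδ => ?_⟩
  calc j * M ≤ j * |M| := mul_le_mul_of_nonneg_left (le_abs_self M) hj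
    _ ≤ ε / (|M| + 1) * |M| := mul_le_mul_of_nonneg_right hjδ.le (abs_nonneg M)
    _ < ε := by
      rw [div_mul_eq_mul_div, div_lt_iff₀ (by positivity)]
      nlinarith [abs_nonneg M]

lemma exists_pos_forall_jump_lt (hg : Monotone g) (t : ℝ) {ε : ℝ} (hε : 0 < ε) :
    ∃ δ > 0, ∀ σ, g t < g σ → g σ < g t + δ → jump g σ < ε := by
  by_cases h : ∃ σ₀, g t < g σ₀ ∧ g σ₀ < g t + ε ∧ ε ≤ jump g σ₀
  · obtain ⟨σ₀, h₁, h₂, h₃⟩ := h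
    refine ⟨g σ₀ - g t, by linarith, fun σ hσ₁ hσ₂ => lt_of_not_ge fun hσ => ?_⟩
    have := jump_le_sub_of_lt hg (show g σ < g σ₀ by linarith)
    linarith
  · push Not at h
    exact ⟨ε, hε, fun σ h₁ h₂ => h σ h₁ h₂⟩

lemma jump_tstar_le_sub (hg : Monotone g) (hlc : ∀ x, ContinuousWithinAt g (Iio x) x)
    (hb : b ∉ Cset g) (hsb : s ≤ b) (h : g s < g t) : jump g (tstar g s) ≤ g t - g s := by
  have := jump_le_sub_of_lt hg ((g_tstar hlc hsb hb).symm ▸ h)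
  rwa [g_tstar hlc hsb hb] at this

lemma jump_tstar_le (hg : Monotone g) (hb : b ∉ Cset g) (hs : s ∈ Icc a b) :
    jump g (tstar g s) ≤ g (b + 1) - g a := by
  have hs' := tstar_mem_Icc hs hb
  have h₁ := rLim_le hg (hs'.2.trans_lt (lt_add_one b))
  have h₂ := hg hs'.1
  show rLim g (tstar g s) - g (tstar g s) ≤ _
  linarith

lemma norm_jump_tstar_smul_le (hg : Monotone g) (hM : ∀ s ∈ Icc a b, ‖F s‖ ≤ M)
    (hs : s ∈ Icc a b) : ‖jump g (tstar g s) • F s‖ ≤ jump g (tstar g s) * M := by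
  rw [norm_smul, Real.norm_of_nonneg (jump_nonneg hg _)]
  exact mul_le_mul_of_nonneg_left (hM s hs) (jump_nonneg hg _)

lemma exists_pos_forall_norm_jump_tstar_smul_lt_below (hg : Monotone g)
    (hlc : ∀ x, ContinuousWithinAt g (Iio x) x) (hb : b ∉ Cset g)
    (hM : ∀ s ∈ Icc a b, ‖F s‖ ≤ M) (t : ℝ) :
    ∀ ε > 0, ∃ δ > 0, ∀ s ∈ Icc a b, g t - δ < g s → g s < g t →
      ‖jump g (tstar g s) • F s‖ < ε := fun ε hε => by
  obtain ⟨δ, hδ, H⟩ := exists_pos_forall_mul_lt M hε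
  refine ⟨δ, hδ, fun s hs h₁ h₂ => (norm_jump_tstar_smul_le hg hM hs).trans_lt
    (H _ (jump_nonneg hg _) ?_)⟩
  linarith [jump_tstar_le_sub hg hlc hb hs.2 h₂]

lemma exists_pos_forall_norm_jump_tstar_smul_lt_above (hg : Monotone g)
    (hlc : ∀ x, ContinuousWithinAt g (Iio x) x) (hb : b ∉ Cset g)
    (hM : ∀ s ∈ Icc a b, ‖F s‖ ≤ M) (t : ℝ) :
    ∀ ε > 0, ∃ δ > 0, ∀ s ∈ Icc a b, g t < g s → g s < g t + δ →
      ‖jump g (tstar g s) • F s‖ < ε := fun ε hε => by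
  obtain ⟨δ', hδ', H⟩ := exists_pos_forall_mul_lt M hε
  obtain ⟨δ, hδ, J⟩ := exists_pos_forall_jump_lt hg t hδ'
  refine ⟨δ, hδ, fun s hs h₁ h₂ => (norm_jump_tstar_smul_le hg hM hs).trans_lt
    (H _ (jump_nonneg hg _) (J _ ?_ ?_))⟩ <;> rwa [g_tstar hlc hs.2 hb]

lemma jump_tstar_eq_zero (hg : Monotone g) (hlc : ∀ x, ContinuousWithinAt g (Iio x) x)
    (hb : b ∉ Cset g) (hs : s ∈ Icc a b) (h : levelSup g a b s ∉ Dset g) :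
    jump g (tstar g s) = 0 :=
  ((jump_nonneg hg _).eq_or_lt.resolve_right fun hj =>
    h (tstar_eq_levelSup_of_jump_pos hg hlc hs hb hj ▸ hj)).symm

lemma gContAt_jump_tstar_smul_of_eq_zero (hg : Monotone g)
    (hlc : ∀ x, ContinuousWithinAt g (Iio x) x) (hb : b ∉ Cset g)
    (hM : ∀ s ∈ Icc a b, ‖F s‖ ≤ M) (ht : t ∈ Icc a b)
    (hzero : ∀ s ∈ Icc a b, g s = g t → jump g (tstar g s) • F s = 0) :
    GContAt g (fun s => jump g (tstar g s) • F s) (Icc a b) t := by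
  refine gContAt_of_level_below_above (fun s hs h => (hzero s hs h).trans (hzero t ht rfl).symm)
    (fun ε hε => ?_) (fun ε hε => ?_)
  · obtain ⟨δ, hδ, H⟩ :=
      exists_pos_forall_norm_jump_tstar_smul_lt_below hg hlc hb hM t ε hε
    exact ⟨δ, hδ, fun s hs h₁ h₂ => by
      rw [hzero t ht rfl, zero_sub, norm_neg]; exact H s hs h₁ h₂⟩
  · obtain ⟨δ, hδ, H⟩ :=
      exists_pos_forall_norm_jump_tstar_smul_lt_above hg hlc hb hM t ε hε
    exact ⟨δ, hδ, fun s hs h₁ h₂ => by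
      rw [hzero t ht rfl, zero_sub, norm_neg]; exact H s hs h₁ h₂⟩

lemma gContAt_jump_tstar_smul_of_not_approachedFromBelow (hg : Monotone g)
    (hlc : ∀ x, ContinuousWithinAt g (Iio x) x) (ha : a ∉ Nminus g) (hb : b ∉ Cset g)
    (hF : GContAt g F (Icc a b) t) (ht : t ∈ Icc a b) (hτ : levelSup g a b t ∈ Dset g)
    (hna : ¬ ApproachedFromBelow g (Icc a b) (g t)) :
    GContAt g (fun s => jump g (tstar g s) • F s) (Icc a b) t := by
  have hstar : ∀ s ∈ Icc a b, g s = g t → tstar g s = levelSup g a b t := fun s hs h =>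
    (tstar_eq_levelSup_of_not_approachedFromBelow hg hlc ha hb hs (h ▸ hna)).trans
      (levelSup_congr h)
  refine gContAt_of_level_below_above (fun s hs h => ?_) (fun _ _ => ?_) (fun _ _ => ?_)
  · rw [hstar s hs h, hstar t ht rfl, hF.eq_of_g_eq hs h]
  · unfold ApproachedFromBelow at hna
    push Not at hna
    obtain ⟨δ, hδ, H⟩ := hna
    exact ⟨δ, hδ, fun s hs h₁ h₂ => absurd (H s hs h₁) (not_le.2 h₂)⟩
  · refine ⟨jump g (levelSup g a b t), hτ, fun s _ h₁ h₂ => absurd h₂ (not_lt.2 ?_)⟩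
    have := jump_le_sub_of_lt hg ((g_levelSup hg hlc ht).symm ▸ h₁)
    rw [g_levelSup hg hlc ht] at this
    linarith

lemma memBCg_jump_tstar_smul (hg : Monotone g) (hb : b ∉ Cset g)
    (hF : ∃ M, ∀ s ∈ Icc a b, ‖F s‖ ≤ M)
    (hQ : ∀ t ∈ Icc a b, GContAt g (fun s => jump g (tstar g s) • F s) (Icc a b) t) :
    MemBCg g a b (fun s => jump g (tstar g s) • F s) := by
  obtain ⟨M, hM⟩ := hF
  refine ⟨⟨(g (b + 1) - g a) * M, fun s hs => ?_⟩, hQ⟩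
  refine (norm_jump_tstar_smul_le hg hM hs).trans ?_
  exact mul_le_mul_of_nonneg_right (jump_tstar_le hg hb hs) ((norm_nonneg _).trans (hM s hs))

theorem gContAt_jump_tstar_smul_iff (hg : Monotone g)
    (hlc : ∀ x, ContinuousWithinAt g (Iio x) x) (hab : a ≤ b) (ha : a ∉ Nminus g)
    (hbD : b ∉ Dset g) (hbC : b ∉ Cset g) (hF : MemBCg g a b F) :
    (∀ t ∈ Icc a b, GContAt g (fun s => jump g (tstar g s) • F s) (Icc a b) t) ↔
      ∀ t ∈ (Ioo (tstar g a) b ∩ Ag g a b) \ Hg g, F t = 0 := by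
  obtain ⟨⟨M, hM⟩, hFc⟩ := hF
  constructor
  · rintro hQ t ⟨⟨⟨hat, htb⟩, hτ⟩, hH⟩
    rw [mem_Ag_iff] at hτ
    have ht : t ∈ Icc a b := ⟨(le_tstar hab hbC).trans hat.le, htb.le⟩
    have hτI := levelSup_mem_Icc (g := g) ht
    have hgτ := g_levelSup hg hlc ht
    have happ := approachedFromBelow_of_tstar_lt hg hlc hab ha hbC hat htb.le hτ hH
    have hQτ := eq_zero_of_gContAt_of_approachedFromBelow (hQ _ hτI)
      (exists_pos_forall_norm_jump_tstar_smul_lt_below hg hlc hbC hM _) (hgτ.symm ▸ happ)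
    rw [tstar_of_notMem_Cset (notMem_Cset_of_mem_Dset hg hτ), (hFc t ht).eq_of_g_eq hτI hgτ]
      at hQτ
    exact (smul_eq_zero.1 hQτ).resolve_left (ne_of_gt hτ)
  · intro hzero t ht
    by_cases hτ : levelSup g a b t ∈ Dset g
    · by_cases happ : ApproachedFromBelow g (Icc a b) (g t)
      · have htb : t < b := ht.2.lt_of_ne fun htb => hbD <|
          le_antisymm (levelSup_le ht) (htb.symm.trans_le (le_levelSup ht rfl)) ▸ hτ
        have hFt : F t = 0 := hzero t ⟨⟨⟨tstar_lt_of_approachedFromBelow hg hlc hab hbC happ,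
          htb⟩, hτ⟩, notMem_Hg_of_approachedFromBelow hg hlc happ⟩
        exact gContAt_jump_tstar_smul_of_eq_zero hg hlc hbC hM ht fun s hs h => by
          rw [(hFc t ht).eq_of_g_eq hs h, hFt, smul_zero]
      · exact gContAt_jump_tstar_smul_of_not_approachedFromBelow hg hlc ha hbC (hFc t ht) ht
          hτ happ
    · exact gContAt_jump_tstar_smul_of_eq_zero hg hlc hbC hM ht fun s hs h => by
        rw [jump_tstar_eq_zero hg hlc hbC hs (levelSup_congr h ▸ hτ), zero_smul]

end JumpTerm

section StieltjesDerivative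

variable {K : Type*} [RCLike K] {a b s T : ℝ} {f f₁ f₂ : ℝ → K} {L L₁ L₂ : K}

lemma continuousAt_of_notMem_Dset (hg : Monotone g) (hlc : ContinuousWithinAt g (Iio T) T)
    (hT : T ∉ Dset g) : ContinuousAt g T := by
  refine continuousAt_iff_continuous_left'_right'.2 ⟨hlc, ?_⟩
  rw [ContinuousWithinAt, ← rLim_eq_of_notMem_Dset hg hT]
  exact hg.tendsto_nhdsGT T

lemma sFilter_neBot (hab : a < b) (ha : a ∉ Nminus g) (hbD : b ∉ Dset g) (hbN : b ∉ Nplus g)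
    (hT : T ∈ Icc a b) : (sFilter g a b T).NeBot := by
  unfold sFilter
  split_ifs with h₁ h₂
  · have hTb : T < b := hT.2.lt_of_ne fun hTb => by
      subst hTb
      rcases h₁ with h | h | h
      exacts [hbD h, hbN h, hab.ne' h]
    exact (left_nhdsWithin_Ioc_neBot hTb).mono
      (nhdsWithin_mono _ fun u hu => ⟨hu.1, hT.1.trans hu.1.le, hu.2⟩)
  · have haT : a < T := hT.1.lt_of_ne fun haT => by
      subst haT
      rcases h₂ with h | h
      exacts [ha h, hab.ne h]
    exact (right_nhdsWithin_Ico_neBot haT).mono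
      (nhdsWithin_mono _ fun u hu => ⟨hu.2, hu.1, hu.2.le.trans hT.2⟩)
  · rcases hT.2.lt_or_eq with hTb | rfl
    · exact (left_nhdsWithin_Ioc_neBot hTb).mono
        (nhdsWithin_mono _ fun u hu => ⟨⟨hT.1.trans hu.1.le, hu.2⟩, hu.1.ne'⟩)
    · exact (right_nhdsWithin_Ico_neBot hab).mono
        (nhdsWithin_mono _ fun u hu => ⟨⟨hu.1, hu.2.le⟩, hu.2.ne⟩)

lemma tendsto_sFilter (hg : Monotone g) (hlc : ∀ x, ContinuousWithinAt g (Iio x) x)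
    (hbD : b ∉ Dset g) (T : ℝ) : Tendsto g (sFilter g a b T) (𝓝 (rLim g T)) := by
  unfold sFilter
  split_ifs with h₁ h₂
  · exact (hg.tendsto_nhdsGT T).mono_left (nhdsWithin_mono _ inter_subset_left)
  · have hT : T ∉ Dset g := by
      rcases h₂ with h | rfl
      exacts [h.2, hbD]
    rw [rLim_eq_of_notMem_Dset hg hT]
    exact (hlc T).mono_left (nhdsWithin_mono _ inter_subset_left)
  · have hT : T ∉ Dset g := fun h => h₁ (Or.inl h)
    rw [rLim_eq_of_notMem_Dset hg hT]
    exact (continuousAt_of_notMem_Dset hg (hlc T) hT).tendsto.mono_left nhdsWithin_le_nhds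

lemma eventually_ne_sFilter (hg : Monotone g) (hlc : ∀ x, ContinuousWithinAt g (Iio x) x)
    (ha : a ∉ Nminus g) (hbN : b ∉ Nplus g) (hTC : T ∉ Cset g) :
    ∀ᶠ u in sFilter g a b T, g u ≠ g T := by
  have hboth := mem_Dset_of_mem_leftEndpoints_of_mem_rightEndpoints hg (hlc T)
  unfold sFilter
  split_ifs with h₁ h₂ <;> filter_upwards [self_mem_nhdsWithin] with u hu hgu
  · have hl := mem_leftEndpoints_of_eq hg hTC hu.1 hgu.symm
    rcases h₁ with h | h | rfl
    · exact notMem_Dset_of_lt_of_eq hg hu.1 hgu.symm h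
    · exact h.2 (hboth hl h.1)
    · exact ha ⟨hl, notMem_Dset_of_lt_of_eq hg hu.1 hgu.symm⟩
  · have hr := mem_rightEndpoints_of_eq hg hTC hu.1 hgu
    have hTD : T ∉ Dset g := fun h => h₁ (Or.inl h)
    rcases h₂ with h | rfl
    · exact hTD (hboth h.1 hr)
    · exact hbN ⟨hr, hTD⟩
  · push Not at h₁ h₂
    rcases lt_or_gt_of_ne hu.2 with hlt | hgt
    · exact h₁.2.1 ⟨mem_rightEndpoints_of_eq hg hTC hlt hgu, h₁.1⟩
    · exact h₂.1 ⟨mem_leftEndpoints_of_eq hg hTC hgt hgu.symm, h₁.1⟩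

lemma HasSDerivAt.unique (hab : a < b) (ha : a ∉ Nminus g) (hbD : b ∉ Dset g)
    (hbC : b ∉ Cset g) (hbN : b ∉ Nplus g) (hs : s ∈ Icc a b)
    (h₁ : HasSDerivAt g a b f s L₁) (h₂ : HasSDerivAt g a b f s L₂) : L₁ = L₂ :=
  have := sFilter_neBot hab ha hbD hbN (tstar_mem_Icc hs hbC)
  tendsto_nhds_unique h₁ h₂

lemma HasSDerivAt.tendsto (h : HasSDerivAt g a b f s L)
    (hne : ∀ᶠ u in sFilter g a b (tstar g s), g u ≠ g (tstar g s))
    (hlim : Tendsto g (sFilter g a b (tstar g s)) (𝓝 (rLim g (tstar g s)))) :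
    Tendsto f (sFilter g a b (tstar g s)) (𝓝 (f (tstar g s) + jump g (tstar g s) • L)) := by
  refine (tendsto_const_nhds.add ((hlim.sub_const (g (tstar g s))).smul h)).congr' ?_
  filter_upwards [hne] with u hu
  rw [smul_inv_smul₀ (sub_ne_zero.2 hu), add_sub_cancel]

lemma HasSDerivAt.mul (h₁ : HasSDerivAt g a b f₁ s L₁) (h₂ : HasSDerivAt g a b f₂ s L₂)
    (hg : Monotone g) (hlc : ∀ x, ContinuousWithinAt g (Iio x) x) (ha : a ∉ Nminus g)
    (hbD : b ∉ Dset g) (hbC : b ∉ Cset g) (hbN : b ∉ Nplus g) (hs : s ∈ Icc a b)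
    (hc₁ : GContAt g f₁ (Icc a b) s) (hc₂ : GContAt g f₂ (Icc a b) s) :
    HasSDerivAt g a b (fun u => f₁ u * f₂ u) s
      (f₁ s * L₂ + f₂ s * L₁ + jump g (tstar g s) • (L₁ * L₂)) := by
  have hTI := tstar_mem_Icc hs hbC
  have hgT := g_tstar hlc hs.2 hbC
  have hf₁ := h₁.tendsto (eventually_ne_sFilter hg hlc ha hbN (tstar_notMem_Cset hs.2 hbC))
    (tendsto_sFilter hg hlc hbD _)
  have hval : (f₁ (tstar g s) + jump g (tstar g s) • L₁) * L₂ + L₁ * f₂ (tstar g s) =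
      f₁ s * L₂ + f₂ s * L₁ + jump g (tstar g s) • (L₁ * L₂) := by
    rw [hc₁.eq_of_g_eq hTI hgT, hc₂.eq_of_g_eq hTI hgT]
    simp only [RCLike.real_smul_eq_coe_mul]
    ring
  unfold HasSDerivAt
  rw [← hval]
  refine ((hf₁.mul h₂).add (h₁.mul_const _)).congr fun u => ?_
  simp only [RCLike.real_smul_eq_coe_mul]
  ring

end StieltjesDerivative

/-- Characterization of when the product of two `BC¹_g` functions is again `BC¹_g`. -/
theorem stmt17 {K : Type*} [RCLike K] (g : ℝ → ℝ) (hg : Monotone g)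
    (hlc : ∀ x : ℝ, ContinuousWithinAt g (Set.Iio x) x)
    (a b : ℝ) (hab : a < b) (ha : a ∉ Nminus g ∪ Dset g)
    (hb : b ∉ Dset g ∪ Cset g ∪ Nplus g)
    (f₁ f₂ f₁' f₂' : ℝ → K)
    (hf₁ : MemBCg g a b f₁) (hf₂ : MemBCg g a b f₂)
    (hd₁ : ∀ s ∈ Set.Icc a b, HasSDerivAt g a b f₁ s (f₁' s))
    (hd₂ : ∀ s ∈ Set.Icc a b, HasSDerivAt g a b f₂ s (f₂' s))
    (hf₁' : MemBCg g a b f₁') (hf₂' : MemBCg g a b f₂') :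
    MemBC1g g a b (fun s => f₁ s * f₂ s) ↔
      ∀ t ∈ (Set.Ioo (tstar g a) b ∩ Ag g a b) \ Hg g, f₁' t * f₂' t = 0 := by
  have ha' : a ∉ Nminus g := fun h => ha (Or.inl h)
  have hbD : b ∉ Dset g := fun h => hb (Or.inl (Or.inl h))
  have hbC : b ∉ Cset g := fun h => hb (Or.inl (Or.inr h))
  have hbN : b ∉ Nplus g := fun h => hb (Or.inr h)
  have hF := hf₁'.mul hf₂'
  have hP := (hf₁.mul hf₂').add (hf₂.mul hf₁')
  have hderiv : ∀ s ∈ Icc a b, HasSDerivAt g a b (fun u => f₁ u * f₂ u) s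
      (f₁ s * f₂' s + f₂ s * f₁' s + jump g (tstar g s) • (f₁' s * f₂' s)) :=
    fun s hs =>
      (hd₁ s hs).mul (hd₂ s hs) hg hlc ha' hbD hbC hbN hs (hf₁.2 s hs) (hf₂.2 s hs)
  rw [← gContAt_jump_tstar_smul_iff hg hlc hab.le ha' hbD hbC hF]
  constructor
  · rintro ⟨-, h, hh, hhc⟩ t ht
    have heq : EqOn h _ (Icc a b) := fun s hs =>
      (hh s hs).unique hab ha' hbD hbC hbN hs (hderiv s hs)
    exact (((hhc.2 t ht).congr heq ht).sub (hP.2 t ht)).congr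
      (fun s _ => add_sub_cancel_left _ _) ht
  · intro hQ
    exact ⟨hf₁.mul hf₂, _, hderiv, hP.add (memBCg_jump_tstar_smul hg hbC hF.1 hQ)⟩
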